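/- For every integer sequence w = (w_1, w_2, …) with w_i ∈ {−1, 1}, the set Λ_w = {Σ_{i=1}^k a_i w_i p^{i−1} : k ≥ 1, a_i ∈ {0,1,…,q−1}} satisfies D_s^+(Λ_w) = (2(p−1)/(q−1))^s. -/

import Mathlib

open Filter Set
open scoped ENNReal NNReal

/-- The upper `r`-Beurling density of a set `Λ ⊆ ℝ`:
`D_r^+(Λ) = limsup_{h→∞} sup_{x∈ℝ} #(Λ ∩ (x−h, x+h)) / h^r`. -/
noncomputable def beurlingDensityPlus (r : ℝ) (Λ : Set ℝ) : ℝ≥0∞ :=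
  Filter.limsup
    (fun h : ℝ => ⨆ x : ℝ, ((Λ ∩ Set.Ioo (x - h) (x + h)).encard : ℝ≥0∞) / ENNReal.ofReal (h ^ r))
    Filter.atTop

set_option linter.unnecessarySeqFocus false
set_option linter.unusedVariables false
set_option linter.unusedTactic false

namespace BDS


set_option linter.unusedSectionVars false

lemma conc {s : ℝ} (hs0 : 0 ≤ s) (hs1 : s ≤ 1) {θ X Y x y : ℝ}
    (hθ0 : 0 ≤ θ) (hθ1 : θ ≤ 1) (hX : 0 ≤ X) (hY : 0 ≤ Y)
    (hx : x ≤ X ^ s) (hy : y ≤ Y ^ s) :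
    θ * x + (1 - θ) * y ≤ (θ * X + (1 - θ) * Y) ^ s := by
  have h := (Real.concaveOn_rpow hs0 hs1).2 (mem_Ici.2 hX) (mem_Ici.2 hY) hθ0
    (by linarith : (0:ℝ) ≤ 1 - θ) (by ring)
  simp only [smul_eq_mul] at h
  have h1 : θ * x + (1 - θ) * y ≤ θ * (X ^ s) + (1 - θ) * (Y ^ s) := by
    gcongr <;> linarith
  linarith

noncomputable def sval (p q : ℕ) : ℝ := Real.log q / Real.log p
noncomputable def gam (p q : ℕ) : ℝ := ((p:ℝ) - 1) / ((q:ℝ) - 1)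

noncomputable def G (p q : ℕ) (c : ℕ) : ℝ :=
  if c = 0 then 0 else (gam p q * ((c:ℝ) - 1) + 1) ^ sval p q

section facts
variable {p q : ℕ} (hq : 2 ≤ q) (hqp : q ≤ p)
include hq hqp

lemma q1 : (1:ℝ) < q := by exact_mod_cast hq.trans_lt' one_lt_two
lemma p1 : (1:ℝ) < p := (q1 hq hqp).trans_le (by exact_mod_cast hqp)

lemma sval_pos : 0 < sval p q :=
  div_pos (Real.log_pos (q1 hq hqp)) (Real.log_pos (p1 hq hqp))

lemma sval_le_one : sval p q ≤ 1 := by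
  have h1 : (0:ℝ) < q := by positivity
  exact div_le_one_of_le₀ (Real.log_le_log h1 (by exact_mod_cast hqp))
    (Real.log_nonneg (p1 hq hqp).le)

lemma rpow_sval : (p:ℝ) ^ sval p q = q := by
  have h1 := p1 hq hqp
  rw [sval, Real.rpow_def_of_pos (by linarith)]
  rw [mul_div_assoc', mul_comm, mul_div_assoc, div_self (Real.log_pos h1).ne',
    mul_one, Real.exp_log (by positivity)]

lemma gam_ge_one : 1 ≤ gam p q := by
  have h1 := q1 hq hqp
  have h2 : (q:ℝ) ≤ p := by exact_mod_cast hqp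
  rw [gam, le_div_iff₀ (by linarith)]
  linarith

lemma gam_pos : 0 < gam p q := lt_of_lt_of_le one_pos (gam_ge_one hq hqp)

lemma gam_mul : gam p q * ((q:ℝ) - 1) = (p:ℝ) - 1 := by
  have h1 := q1 hq hqp
  rw [gam, div_mul_cancel₀]; linarith

omit hq hqp in
lemma G_zero : G p q 0 = 0 := by simp [G]

omit hq hqp in
lemma G_one : G p q 1 = 1 := by simp [G]

omit hq hqp in
lemma G_succ (n : ℕ) : G p q (n + 1) = (gam p q * n + 1) ^ sval p q := by
  simp [G]

omit hq hqp in
lemma G_pos_eq {c : ℕ} (hc : c ≠ 0) :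
    G p q c = (gam p q * ((c:ℝ) - 1) + 1) ^ sval p q := if_neg hc

lemma G_nonneg (c : ℕ) : 0 ≤ G p q c := by
  have hγ := gam_pos hq hqp
  rcases Nat.eq_zero_or_pos c with rfl | hc
  · simp [G]
  · have h1 : (1:ℝ) ≤ c := by exact_mod_cast hc
    rw [G, if_neg hc.ne']
    have : (0:ℝ) ≤ gam p q * ((c:ℝ) - 1) + 1 := by nlinarith
    positivity

lemma G_mono : Monotone (G p q) := by
  have hγ := gam_pos hq hqp
  have hs := (sval_pos hq hqp).le
  intro c c' hcc
  rcases Nat.eq_zero_or_pos c with rfl | hc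
  · rw [G_zero]; exact G_nonneg hq hqp c'
  · have hc' := hc.trans_le hcc
    have h1 : (1:ℝ) ≤ c := by exact_mod_cast hc
    have h2 : (c:ℝ) ≤ c' := by exact_mod_cast hcc
    rw [G, if_neg hc.ne', G, if_neg hc'.ne']
    apply Real.rpow_le_rpow (by nlinarith) (by nlinarith) hs

lemma core (Q k : ℕ) (hk : k ≤ q) :
    (k:ℝ) * G p q (Q + 1) + ((q:ℝ) - k) * G p q Q ≤ G p q (Q * p + k) := by
  have hγ1 := gam_ge_one hq hqp
  have hγ : 0 < gam p q := gam_pos hq hqp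
  have hs0 := (sval_pos hq hqp).le
  have hs1 := sval_le_one hq hqp
  have hq1 := q1 hq hqp
  have hp1 := p1 hq hqp
  have hkq : (k:ℝ) ≤ q := by exact_mod_cast hk
  have hgm := gam_mul hq hqp
  set γ := gam p q with hγdef
  set s := sval p q with hsdef
  rcases Nat.eq_zero_or_pos Q with rfl | hQ
  · -- goal: k * G 1 + (q-k) * G 0 ≤ G k
    simp only [Nat.zero_mul, Nat.zero_add, zero_add, G_zero, G_one,
      mul_zero, add_zero, mul_one]
    rcases Nat.eq_zero_or_pos k with rfl | hk1
    · simpa using G_nonneg hq hqp 0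
    · have hk1' : (1:ℝ) ≤ k := by exact_mod_cast hk1
      rw [G_pos_eq hk1.ne']
      have hθ0 : (0:ℝ) ≤ ((k:ℝ) - 1) / ((q:ℝ) - 1) := by
        apply div_nonneg <;> linarith
      have hθ1 : ((k:ℝ) - 1) / ((q:ℝ) - 1) ≤ 1 := by
        rw [div_le_one (by linarith)]; linarith
      have h := conc hs0 hs1 hθ0 hθ1 (by linarith : (0:ℝ) ≤ (p:ℝ))
        zero_le_one (le_of_eq (rpow_sval hq hqp).symm)
        (le_of_eq (Real.one_rpow _).symm)
      set θ : ℝ := ((k:ℝ) - 1) / ((q:ℝ) - 1) with hθd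
      have hqne : (q:ℝ) - 1 ≠ 0 := by linarith
      have e1 : θ * (q:ℝ) + (1 - θ) * 1 = (k:ℝ) := by
        rw [hθd]; field_simp; ring
      have e2 : θ * (p:ℝ) + (1 - θ) * 1 = γ * ((k:ℝ) - 1) + 1 := by
        rw [hθd, hγdef, gam]; field_simp; ring
      rw [e1, e2] at h
      linarith
  · -- Q ≥ 1
    have hQ1 : (1:ℝ) ≤ Q := by exact_mod_cast hQ
    have hppos : 0 < p := by omega
    have hQp : Q * p + k ≠ 0 := by
      have := Nat.mul_pos hQ hppos; omega
    rw [G_pos_eq (Nat.succ_ne_zero Q), G_pos_eq hQ.ne', G_pos_eq hQp]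
    have b1 : γ * ((↑(Q+1):ℝ) - 1) + 1 = γ * Q + 1 := by push_cast; ring
    have b3 : γ * ((↑(Q*p+k):ℝ) - 1) + 1 = γ * ((Q:ℝ) * p + k - 1) + 1 := by
      push_cast; ring
    rw [b1, b3]
    have hqpos : (0:ℝ) < q := by linarith
    have hqne : (q:ℝ) ≠ 0 := by linarith
    have hθ0 : (0:ℝ) ≤ (k:ℝ) / q := by positivity
    have hθ1 : (k:ℝ) / q ≤ 1 := by rw [div_le_one hqpos]; linarith
    have hγQ : (0:ℝ) ≤ γ * Q := mul_nonneg hγ.le (by linarith)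
    have hγQ1 : γ * 1 ≤ γ * Q := mul_le_mul_of_nonneg_left hQ1 hγ.le
    have hB : (0:ℝ) ≤ γ * Q + 1 := by linarith
    have hA : (0:ℝ) ≤ γ * ((Q:ℝ) - 1) + 1 := by
      have := mul_nonneg hγ.le (by linarith : (0:ℝ) ≤ (Q:ℝ) - 1); linarith
    have hX : (0:ℝ) ≤ (p:ℝ) * (γ * Q + 1) := mul_nonneg (by linarith) hB
    have hY : (0:ℝ) ≤ γ * Q * p - γ + 1 := by
      have h2 : γ * Q ≤ γ * Q * p := le_mul_of_one_le_right hγQ hp1.le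
      linarith
    have hkey : (p:ℝ) * (γ * ((Q:ℝ) - 1) + 1) ≤ γ * Q * p - γ + 1 := by
      have key : 0 ≤ (γ - 1) * ((p:ℝ) - 1) := mul_nonneg (by linarith) (by linarith)
      nlinarith [key]
    have hx : (q:ℝ) * (γ * Q + 1) ^ s ≤ ((p:ℝ) * (γ * Q + 1)) ^ s := by
      rw [Real.mul_rpow (by linarith) hB, rpow_sval hq hqp]
    have hy : (q:ℝ) * (γ * ((Q:ℝ) - 1) + 1) ^ s ≤ (γ * Q * p - γ + 1) ^ s := by
      have h1 : (q:ℝ) * (γ * ((Q:ℝ) - 1) + 1) ^ s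
          = ((p:ℝ) * (γ * ((Q:ℝ) - 1) + 1)) ^ s := by
        rw [Real.mul_rpow (by linarith) hA, rpow_sval hq hqp]
      rw [h1]
      exact Real.rpow_le_rpow (mul_nonneg (by linarith) hA) hkey hs0
    have h := conc hs0 hs1 hθ0 hθ1 hX hY hx hy
    have e1 : (k:ℝ)/q * ((q:ℝ) * (γ * Q + 1) ^ s)
        + (1 - (k:ℝ)/q) * ((q:ℝ) * (γ * ((Q:ℝ) - 1) + 1) ^ s)
        = (k:ℝ) * (γ * Q + 1) ^ s + ((q:ℝ) - k) * (γ * ((Q:ℝ) - 1) + 1) ^ s := by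
      field_simp
    have hd : (p:ℝ) * (γ * Q + 1) - (γ * Q * p - γ + 1) = γ * q := by
      linear_combination -hgm
    have e2 : (k:ℝ)/q * ((p:ℝ) * (γ * Q + 1)) + (1 - (k:ℝ)/q) * (γ * Q * p - γ + 1)
        = γ * ((Q:ℝ) * p + k - 1) + 1 := by
      have hth : (k:ℝ)/q * (γ * q) = γ * k := by field_simp
      calc (k:ℝ)/q * ((p:ℝ) * (γ * Q + 1)) + (1 - (k:ℝ)/q) * (γ * Q * p - γ + 1)
          = (γ * Q * p - γ + 1) + (k:ℝ)/q * (((p:ℝ) * (γ * Q + 1)) - (γ * Q * p - γ + 1)) := by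
            ring
        _ = (γ * Q * p - γ + 1) + (k:ℝ)/q * (γ * q) := by rw [hd]
        _ = γ * ((Q:ℝ) * p + k - 1) + 1 := by rw [hth]; ring
    rw [e1, e2] at h
    exact h

end facts



lemma ncard_biUnion_le {α β : Type*} (s : Finset α) (f : α → Set β) :
    (⋃ a ∈ s, f a).ncard ≤ ∑ a ∈ s, (f a).ncard := by
  classical
  induction s using Finset.cons_induction with
  | empty => simp
  | cons a s ha ih =>
    rw [Finset.sum_cons]
    have he : (⋃ x ∈ Finset.cons a s ha, f x) = f a ∪ ⋃ x ∈ s, f x := by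
      simp [Finset.cons_eq_insert]
    rw [he]
    exact le_trans (Set.ncard_union_le _ _) (Nat.add_le_add_left ih _)

def Lam (p q : ℕ) (w : ℕ → ℤ) : Set ℤ :=
  {x | ∃ k : ℕ, 1 ≤ k ∧ ∃ a : ℕ → ℕ, (∀ i, a i < q) ∧
      x = ∑ i ∈ Finset.range k, (a i : ℤ) * w i * (p:ℤ) ^ i}

lemma zero_mem_Lam (p q : ℕ) (hq : 1 ≤ q) (w : ℕ → ℤ) : 0 ∈ Lam p q w :=
  ⟨1, le_refl _, (fun _ => 0), fun _ => hq, by simp⟩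

lemma Lam_decomp (p q : ℕ) (hq : 1 ≤ q) (w : ℕ → ℤ) {y : ℤ} (hy : y ∈ Lam p q w) :
    ∃ d : ℕ, d < q ∧ ∃ y' ∈ Lam p q (fun i => w (i+1)), y = w 0 * d + p * y' := by
  obtain ⟨k, hk, a, ha, rfl⟩ := hy
  refine ⟨a 0, ha 0, ∑ i ∈ Finset.range (k-1), (a (i+1) : ℤ) * w (i+1) * (p:ℤ) ^ i, ?_, ?_⟩
  · rcases Nat.lt_or_ge (k-1) 1 with h1 | h1
    · have : k - 1 = 0 := by omega
      rw [this]
      simpa using zero_mem_Lam p q hq _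
    · exact ⟨k-1, h1, fun i => a (i+1), fun i => ha (i+1), rfl⟩
  · have hk1 : k = (k-1) + 1 := by omega
    have hterm : ∀ i ∈ Finset.range (k-1),
        (a (i+1) : ℤ) * w (i+1) * (p:ℤ) ^ (i+1)
          = (p:ℤ) * ((a (i+1) : ℤ) * w (i+1) * (p:ℤ) ^ i) := fun i _ => by ring
    rw [hk1, Finset.sum_range_succ', Finset.sum_congr rfl hterm, ← Finset.mul_sum,
      pow_zero, mul_one]
    simp only [Nat.add_sub_cancel]
    ring


lemma count_le {p q : ℕ} (hq : 2 ≤ q) (hqp : q ≤ p) :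
    ∀ n : ℕ, ∀ w : ℕ → ℤ, (∀ i, w i = 1 ∨ w i = -1) → ∀ a : ℤ,
    ((Lam p q w ∩ Set.Icc a (a + (n:ℤ))).ncard : ℝ) ≤ G p q (n + 1) := by
  intro n
  induction n using Nat.strong_induction_on with
  | _ n ih =>
  intro w hw a
  have hppos : 0 < p := by omega
  have hpz : (0:ℤ) < p := by exact_mod_cast hppos
  rcases Nat.eq_zero_or_pos n with rfl | hn
  · have hsub : Lam p q w ∩ Set.Icc a (a + ((0:ℕ):ℤ)) ⊆ {a} := by
      rintro y ⟨-, hy2⟩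
      simp only [Set.mem_Icc] at hy2
      simp only [Set.mem_singleton_iff]
      omega
    have h1 : (Lam p q w ∩ Set.Icc a (a + ((0:ℕ):ℤ))).ncard ≤ 1 := by
      simpa using Set.ncard_le_ncard hsub (Set.finite_singleton a)
    calc ((Lam p q w ∩ Set.Icc a (a + ((0:ℕ):ℤ))).ncard : ℝ) ≤ 1 := by exact_mod_cast h1
      _ = G p q (0 + 1) := (G_one).symm
  · set w' : ℕ → ℤ := fun i => w (i+1) with hw'def
    have hw' : ∀ i, w' i = 1 ∨ w' i = -1 := fun i => hw (i+1)
    set ε : ℤ := w 0 with hεdef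
    have hε : ε = 1 ∨ ε = -1 := hw 0
    set t : ℕ → ℕ := fun d => ((ε * d - a) % p).toNat with htdef
    have ht : ∀ d : ℕ, (t d : ℤ) = (ε * d - a) % p := fun d =>
      Int.toNat_of_nonneg (Int.emod_nonneg _ hpz.ne')
    have htlt : ∀ d, t d < p := by
      intro d
      have h2 : (t d : ℤ) < (p:ℤ) := by rw [ht d]; exact Int.emod_lt_of_pos _ hpz
      exact_mod_cast h2
    set K : ℕ → Set ℤ := fun d =>
      {z | a ≤ ε * d + p * z ∧ ε * d + p * z ≤ a + n} with hKdef
    -- structure of K d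
    have hKstruct : ∀ d : ℕ, t d ≤ n →
        K d = Set.Icc (-((ε * d - a) / p)) (-((ε * d - a) / p) + ((n - t d)/p : ℕ)) := by
      intro d htd
      set zmin : ℤ := -((ε * d - a) / p) with hzm
      set md : ℕ := (n - t d)/p with hmd
      have hpzmin : p * zmin = a + t d - ε * d := by
        rw [hzm, ht d, Int.emod_def]; ring
      have hdm := Nat.div_add_mod (n - t d) p
      have hmod := Nat.mod_lt (n - t d) hppos
      have ecast : ((n - t d : ℕ) : ℤ) = (n:ℤ) - t d := by
        push_cast [Nat.cast_sub htd]; ring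
      have hdmz : (n:ℤ) - t d = (p:ℤ) * md + ((n - t d) % p : ℕ) := by
        rw [← ecast]
        exact_mod_cast hdm.symm
      have hmodz : (((n - t d) % p : ℕ) : ℤ) < (p:ℤ) := by exact_mod_cast hmod
      have hmodz0 : (0:ℤ) ≤ (((n - t d) % p : ℕ) : ℤ) := by positivity
      have hmd1 : (p:ℤ) * md ≤ (n:ℤ) - t d := by linarith
      have hmd2 : (n:ℤ) - t d < p * (md + 1) := by
        rw [mul_add, mul_one]
        linarith
      ext z
      simp only [hKdef, Set.mem_setOf_eq, Set.mem_Icc]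
      constructor
      · rintro ⟨h1, h2⟩
        constructor
        · have : p * zmin < p * (z + 1) := by
            rw [hpzmin]
            have : (t d : ℤ) < p := by exact_mod_cast htlt d
            linarith
          have := lt_of_mul_lt_mul_left this hpz.le
          omega
        · have : p * (z - zmin) < p * (md + 1) := by
            rw [mul_sub, hpzmin]
            linarith
          have := lt_of_mul_lt_mul_left this hpz.le
          omega
      · rintro ⟨h1, h2⟩
        have e1 : p * zmin ≤ p * z := by
          exact mul_le_mul_of_nonneg_left h1 hpz.le
        have e2 : p * z ≤ p * zmin + p * md := by
          have := mul_le_mul_of_nonneg_left h2 hpz.le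
          rw [mul_add] at this
          linarith
        have htd0 : (0:ℤ) ≤ t d := by positivity
        constructor
        · rw [hpzmin] at e1; linarith
        · rw [hpzmin] at e2; linarith
    have hKempty : ∀ d : ℕ, n < t d → K d = ∅ := by
      intro d htd
      ext z
      simp only [hKdef, Set.mem_setOf_eq, Set.mem_empty_iff_false, iff_false, not_and, not_le]
      intro h1
      by_contra h2
      push_neg at h2
      set x : ℤ := ε * d + p * z - a with hx
      have hx0 : 0 ≤ x := by omega
      have hxn : x ≤ n := by omega
      have hxmod : x % p = (ε * d - a) % p := by
        have : x = (ε * d - a) + p * z := by rw [hx]; ring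
        rw [this, Int.add_mul_emod_self_left]
      have hxle : x % p ≤ x := by
        rw [Int.emod_def]
        have : 0 ≤ x / p := Int.ediv_nonneg hx0 hpz.le
        nlinarith
      have : (t d : ℤ) ≤ n := by
        rw [ht d, ← hxmod]
        omega
      have : t d ≤ n := by exact_mod_cast this
      omega
    -- finiteness of pieces
    have hKfin : ∀ d : ℕ, (Lam p q w' ∩ K d).Finite := by
      intro d
      rcases le_or_gt (t d) n with h | h
      · rw [hKstruct d h]
        exact (Set.finite_Icc _ _).inter_of_right _
      · rw [hKempty d h]
        simp
    -- the cover
    have hcover : Lam p q w ∩ Set.Icc a (a + (n:ℤ)) ⊆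
        ⋃ d ∈ Finset.range q, (fun z => ε * d + p * z) '' (Lam p q w' ∩ K d) := by
      rintro y ⟨hy, hy2⟩
      obtain ⟨d, hd, y', hy', rfl⟩ := Lam_decomp p q (by omega) w hy
      simp only [Set.mem_Icc] at hy2
      refine Set.mem_biUnion (Finset.mem_range.2 hd) ⟨y', ⟨hy', ?_, ?_⟩, rfl⟩
      · exact hy2.1
      · exact hy2.2
    -- counting
    set N := n + 1 with hN
    set Q := N / p with hQ
    set R := N % p with hR
    have hNQR : N = Q * p + R := by
      rw [hQ, hR, Nat.mul_comm]
      exact (Nat.div_add_mod N p).symm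
    have hRp : R < p := Nat.mod_lt _ hppos
    have hstep1 : (Lam p q w ∩ Set.Icc a (a + (n:ℤ))).ncard
        ≤ ∑ d ∈ Finset.range q, (Lam p q w' ∩ K d).ncard := by
      refine le_trans (Set.ncard_le_ncard hcover ?_) ?_
      · apply Set.Finite.biUnion (Finset.range q).finite_toSet
        intro d _
        exact (hKfin d).image _
      · refine le_trans (ncard_biUnion_le _ _) ?_
        apply Finset.sum_le_sum
        intro d _
        apply le_of_eq
        apply Set.ncard_image_of_injective
        intro z1 z2 h12
        have h3 : (p:ℤ) * z1 = (p:ℤ) * z2 := by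
          have := h12
          simp only at this
          omega
        exact mul_left_cancel₀ hpz.ne' h3
    -- per-piece real bound
    have hpiece : ∀ d : ℕ, ((Lam p q w' ∩ K d).ncard : ℝ)
        ≤ if t d < R then G p q (Q + 1) else G p q Q := by
      intro d
      rcases le_or_gt (t d) n with h | h
      · set md : ℕ := (n - t d)/p with hmd
        have hmdn : md < n := by
          rcases Nat.eq_zero_or_pos (t d) with h0 | h0
          · have : md = n / p := by rw [hmd, h0, Nat.sub_zero]
            rw [this]
            exact Nat.div_lt_self hn (by omega)
          · have h1 : md ≤ n - t d := Nat.div_le_self _ _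
            omega
        have hihd := ih md hmdn w' hw' (-((ε * d - a) / p))
        rw [hKstruct d h]
        have hGmd : ((Lam p q w' ∩ Set.Icc (-((ε * d - a) / p))
            (-((ε * d - a) / p) + (md:ℤ))).ncard : ℝ) ≤ G p q (md + 1) := hihd
        split_ifs with hcase
        · -- t d < R : md ≤ Q
          refine le_trans hGmd (G_mono hq hqp ?_)
          have : md ≤ n / p := by
            rw [hmd]
            exact Nat.div_le_div_right (by omega)
          have hnp : n / p ≤ Q := by
            rw [hQ, hN]
            exact Nat.div_le_div_right (by omega)
          omega
        · -- t d ≥ R : md + 1 ≤ Q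
          push_neg at hcase
          have hQpos : 0 < Q := by
            rcases Nat.eq_zero_or_pos Q with h0 | h0
            · exfalso; rw [h0] at hNQR; omega
            · exact h0
          have hmdQ : md < Q := by
            rw [hmd]
            rw [Nat.div_lt_iff_lt_mul hppos]
            have : n - t d ≤ n - R := by omega
            have h2 : n - R < Q * p := by omega
            omega
          exact le_trans hGmd (G_mono hq hqp hmdQ)
      · rw [hKempty d h]
        simp only [Set.inter_empty, Set.ncard_empty, Nat.cast_zero]
        split_ifs
        · exact G_nonneg hq hqp _
        · exact G_nonneg hq hqp _
    -- injectivity of t on range q, so few small t's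
    have htinj : Set.InjOn t (Finset.range q : Set ℕ) := by
      intro d1 h1 d2 h2 h12
      simp only [Finset.coe_range, Set.mem_Iio] at h1 h2
      by_contra hne
      have hd : ((ε * d1 - a) % p) = ((ε * d2 - a) % p) := by
        have := congrArg (fun x : ℕ => (x:ℤ)) h12
        simpa [ht d1, ht d2] using this
      have hmeq : (ε * d1 - a) ≡ (ε * d2 - a) [ZMOD (p:ℤ)] := hd
      have hdvd : (p:ℤ) ∣ (ε * (d2 - d1) : ℤ) := by
        have h3 := Int.ModEq.dvd hmeq
        have e : (ε * d2 - a) - (ε * d1 - a) = ε * ((d2:ℤ) - d1) := by ring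
        rwa [e] at h3
      have hdvd2 : (p:ℤ) ∣ ((d2:ℤ) - d1) := by
        rcases hε with h | h
        · rwa [h, one_mul] at hdvd
        · rw [h] at hdvd
          have : (-1 : ℤ) * ((d2:ℤ) - d1) = -(((d2:ℤ) - d1)) := by ring
          rw [this] at hdvd
          exact (dvd_neg).1 hdvd
      have hxne : ((d2:ℤ) - d1) ≠ 0 := by
        intro h0
        apply hne
        omega
      have hple : (p:ℤ) ≤ |(d2:ℤ) - d1| :=
        Int.le_of_dvd (abs_pos.2 hxne) ((dvd_abs _ _).2 hdvd2)
      have habs : |(d2:ℤ) - d1| < p := by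
        rw [abs_lt]
        constructor <;> [omega; omega]
      omega
    have hkR : ((Finset.range q).filter (fun d => t d < R)).card ≤ R := by
      have h1 : ((Finset.range q).filter (fun d => t d < R)).card
          ≤ (Finset.range R).card := by
        apply Finset.card_le_card_of_injOn t
        · intro d hdm
          simp only [Finset.coe_filter, Finset.mem_filter, Set.mem_setOf_eq] at hdm
          exact Finset.mem_range.2 hdm.2
        · intro d1 h1 d2 h2 h12
          apply htinj _ _ h12
          · simp only [Finset.coe_filter, Set.mem_setOf_eq] at h1
            simp only [Finset.coe_range, Set.mem_Iio]
            exact Finset.mem_range.1 h1.1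
          · simp only [Finset.coe_filter, Set.mem_setOf_eq] at h2
            simp only [Finset.coe_range, Set.mem_Iio]
            exact Finset.mem_range.1 h2.1
      simpa using h1
    set k := ((Finset.range q).filter (fun d => t d < R)).card with hkdef
    have hkq : k ≤ q := by
      have := Finset.card_filter_le (Finset.range q) (fun d => t d < R)
      simpa using this
    have hsum : ∑ d ∈ Finset.range q,
        (if t d < R then G p q (Q + 1) else G p q Q)
        = (k:ℝ) * G p q (Q + 1) + ((q:ℝ) - k) * G p q Q := by
      rw [Finset.sum_ite, Finset.sum_const, Finset.sum_const]
      have hcards : ((Finset.range q).filter (fun d => ¬ (t d < R))).card = q - k := by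
        have := Finset.card_filter_add_card_filter_not
          (s := Finset.range q) (p := fun d => t d < R)
        simp only [Finset.card_range] at this
        omega
      rw [hcards, nsmul_eq_mul, nsmul_eq_mul]
      have : ((q - k : ℕ) : ℝ) = (q:ℝ) - k := by
        push_cast [Nat.cast_sub hkq]; ring
      rw [this]
    calc ((Lam p q w ∩ Set.Icc a (a + (n:ℤ))).ncard : ℝ)
        ≤ ((∑ d ∈ Finset.range q, (Lam p q w' ∩ K d).ncard : ℕ) : ℝ) := by
          exact_mod_cast hstep1
      _ = ∑ d ∈ Finset.range q, ((Lam p q w' ∩ K d).ncard : ℝ) := by push_cast; ring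
      _ ≤ ∑ d ∈ Finset.range q, (if t d < R then G p q (Q + 1) else G p q Q) :=
          Finset.sum_le_sum (fun d _ => hpiece d)
      _ = (k:ℝ) * G p q (Q + 1) + ((q:ℝ) - k) * G p q Q := hsum
      _ ≤ G p q (Q * p + k) := core hq hqp Q k hkq
      _ ≤ G p q N := G_mono hq hqp (by omega)

-- ===== bridging and window lemmas =====

lemma sum_shift (p : ℕ) (w : ℕ → ℤ) (a : ℕ → ℕ) (k : ℕ) :
    ∑ i ∈ Finset.range (k+1), (a i : ℤ) * w i * (p:ℤ) ^ i
      = (a 0 : ℤ) * w 0 + (p:ℤ) * ∑ i ∈ Finset.range k, (a (i+1) : ℤ) * w (i+1) * (p:ℤ) ^ i := by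
  have hterm : ∀ i ∈ Finset.range k,
      (a (i+1) : ℤ) * w (i+1) * (p:ℤ) ^ (i+1)
        = (p:ℤ) * ((a (i+1) : ℤ) * w (i+1) * (p:ℤ) ^ i) := fun i _ => by ring
  rw [Finset.sum_range_succ', Finset.sum_congr rfl hterm, ← Finset.mul_sum, pow_zero, mul_one]
  ring

lemma digits_inj {p q : ℕ} (hq : 2 ≤ q) (hqp : q ≤ p) :
    ∀ k : ℕ, ∀ w : ℕ → ℤ, (∀ i, w i = 1 ∨ w i = -1) →
    ∀ a b : ℕ → ℕ, (∀ i, a i < q) → (∀ i, b i < q) →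
    (∑ i ∈ Finset.range k, (a i : ℤ) * w i * (p:ℤ) ^ i
      = ∑ i ∈ Finset.range k, (b i : ℤ) * w i * (p:ℤ) ^ i) →
    ∀ i < k, a i = b i := by
  intro k
  induction k with
  | zero => intro w hw a b ha hb hs i hi; omega
  | succ k IH =>
    intro w hw a b ha hb hs i hi
    rw [sum_shift, sum_shift] at hs
    have hpz : (0:ℤ) < p := by exact_mod_cast (by omega : 0 < p)
    have h0 : a 0 = b 0 := by
      by_contra hne
      have hx : ((a 0 : ℤ) - b 0) ≠ 0 := by
        intro h; apply hne; omega
      have hdvd : (p:ℤ) ∣ w 0 * ((a 0 : ℤ) - b 0) := by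
        refine ⟨(∑ i ∈ Finset.range k, (b (i+1) : ℤ) * w (i+1) * (p:ℤ) ^ i)
          - (∑ i ∈ Finset.range k, (a (i+1) : ℤ) * w (i+1) * (p:ℤ) ^ i), ?_⟩
        linarith [hs]
      have hdvd2 : (p:ℤ) ∣ ((a 0 : ℤ) - b 0) := by
        rcases hw 0 with h | h
        · rwa [h, one_mul] at hdvd
        · rw [h] at hdvd
          have e : (-1 : ℤ) * ((a 0:ℤ) - b 0) = -(((a 0:ℤ) - b 0)) := by ring
          rw [e] at hdvd
          exact (dvd_neg).1 hdvd
      have hple : (p:ℤ) ≤ |(a 0:ℤ) - b 0| :=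
        Int.le_of_dvd (abs_pos.2 hx) ((dvd_abs _ _).2 hdvd2)
      have habs : |(a 0:ℤ) - b 0| < p := by
        rw [abs_lt]
        have := ha 0; have := hb 0
        constructor <;> [omega; omega]
      omega
    have hsum : (∑ i ∈ Finset.range k, (a (i+1) : ℤ) * w (i+1) * (p:ℤ) ^ i)
        = ∑ i ∈ Finset.range k, (b (i+1) : ℤ) * w (i+1) * (p:ℤ) ^ i := by
      have h1 : (p:ℤ) * (∑ i ∈ Finset.range k, (a (i+1) : ℤ) * w (i+1) * (p:ℤ) ^ i)
          = (p:ℤ) * (∑ i ∈ Finset.range k, (b (i+1) : ℤ) * w (i+1) * (p:ℤ) ^ i) := by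
        rw [h0] at hs; linarith [hs]
      exact mul_left_cancel₀ hpz.ne' h1
    rcases Nat.eq_zero_or_pos i with rfl | hipos
    · exact h0
    · have := IH (fun j => w (j+1)) (fun j => hw (j+1)) (fun j => a (j+1)) (fun j => b (j+1))
        (fun j => ha (j+1)) (fun j => hb (j+1)) hsum (i-1) (by omega)
      have e : i - 1 + 1 = i := by omega
      rwa [e] at this

lemma Lam_real (p q : ℕ) (w : ℕ → ℤ) :
    {x : ℝ | ∃ k : ℕ, 1 ≤ k ∧ ∃ a : ℕ → ℕ, (∀ i, a i < q) ∧
        x = ∑ i ∈ Finset.range k, (a i : ℝ) * (w i : ℝ) * (p : ℝ) ^ i}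
      = (fun z : ℤ => (z : ℝ)) '' Lam p q w := by
  ext x
  constructor
  · rintro ⟨k, hk, a, ha, rfl⟩
    refine ⟨∑ i ∈ Finset.range k, (a i : ℤ) * w i * (p:ℤ) ^ i, ⟨k, hk, a, ha, rfl⟩, ?_⟩
    push_cast
    rfl
  · rintro ⟨z, ⟨k, hk, a, ha, rfl⟩, rfl⟩
    refine ⟨k, hk, a, ha, ?_⟩
    push_cast
    rfl

lemma window_upper {p q : ℕ} (hq : 2 ≤ q) (hqp : q ≤ p) {w : ℕ → ℤ}
    (hw : ∀ i, w i = 1 ∨ w i = -1) (x h : ℝ) (hh : 0 < h) :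
    ((((fun z : ℤ => (z:ℝ)) '' Lam p q w) ∩ Set.Ioo (x - h) (x + h)).encard : ℝ≥0∞)
      ≤ ENNReal.ofReal ((gam p q * (2*h) + 1) ^ sval p q) := by
  have hγ := gam_pos hq hqp
  have hs0 := (sval_pos hq hqp).le
  rcases le_or_gt (⌈x - h⌉ : ℤ) ⌊x + h⌋ with hab | hab
  · set a : ℤ := ⌈x - h⌉ with hadef
    set n : ℕ := (⌊x + h⌋ - a).toNat with hndef
    have han : a + (n:ℤ) = ⌊x + h⌋ := by
      rw [hndef]; omega
    have hsub : ((fun z : ℤ => (z:ℝ)) '' Lam p q w) ∩ Set.Ioo (x - h) (x + h)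
        ⊆ (fun z : ℤ => (z:ℝ)) '' (Lam p q w ∩ Set.Icc a (a + (n:ℤ))) := by
      rintro y ⟨⟨z, hz, rfl⟩, hy2⟩
      refine ⟨z, ⟨hz, ?_, ?_⟩, rfl⟩
      · exact Int.ceil_le.2 hy2.1.le
      · rw [han]; exact Int.le_floor.2 hy2.2.le
    have hfin : (Lam p q w ∩ Set.Icc a (a + (n:ℤ))).Finite :=
      (Set.finite_Icc _ _).inter_of_right _
    have hcount := count_le hq hqp n w hw a
    have hn2h : (n:ℝ) ≤ 2 * h := by
      have h1 : ((a:ℝ)) ≥ x - h := Int.le_ceil _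
      have h2 : ((⌊x + h⌋ : ℤ) : ℝ) ≤ x + h := Int.floor_le _
      have h3 : ((a:ℝ) + n) = ((⌊x + h⌋ : ℤ) : ℝ) := by exact_mod_cast congrArg (fun z : ℤ => (z:ℝ)) han
      linarith
    calc ((((fun z : ℤ => (z:ℝ)) '' Lam p q w) ∩ Set.Ioo (x - h) (x + h)).encard : ℝ≥0∞)
        ≤ (((fun z : ℤ => (z:ℝ)) '' (Lam p q w ∩ Set.Icc a (a + (n:ℤ)))).encard : ℝ≥0∞) := by
          exact_mod_cast ENat.toENNReal_le.2 (Set.encard_mono hsub)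
      _ = ((Lam p q w ∩ Set.Icc a (a + (n:ℤ))).encard : ℝ≥0∞) := by
          congr 1
          exact Set.InjOn.encard_image (fun z1 _ z2 _ hz => by exact_mod_cast hz)
      _ = (((Lam p q w ∩ Set.Icc a (a + (n:ℤ))).ncard : ℕ) : ℝ≥0∞) := by
          rw [hfin.encard_eq_coe_toFinset_card, Set.ncard_eq_toFinset_card _ hfin]
          norm_cast
      _ = ENNReal.ofReal (((Lam p q w ∩ Set.Icc a (a + (n:ℤ))).ncard : ℝ)) := by
          rw [ENNReal.ofReal_natCast]
      _ ≤ ENNReal.ofReal (G p q (n+1)) := ENNReal.ofReal_le_ofReal hcount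
      _ ≤ ENNReal.ofReal ((gam p q * (2*h) + 1) ^ sval p q) := by
          apply ENNReal.ofReal_le_ofReal
          rw [G_succ]
          apply Real.rpow_le_rpow (by positivity) _ hs0
          nlinarith
  · have hempty : ((fun z : ℤ => (z:ℝ)) '' Lam p q w) ∩ Set.Ioo (x - h) (x + h) = ∅ := by
      apply Set.eq_empty_iff_forall_notMem.2
      rintro y ⟨⟨z, hz, rfl⟩, hio⟩
      have h3 : (⌈x - h⌉ : ℤ) ≤ z := Int.ceil_le.2 hio.1.le
      have h4 : z ≤ ⌊x + h⌋ := Int.le_floor.2 hio.2.le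
      omega
    rw [hempty]
    simp

lemma window_lower {p q : ℕ} (hq : 2 ≤ q) (hqp : q ≤ p) {w : ℕ → ℤ}
    (hw : ∀ i, w i = 1 ∨ w i = -1) (k : ℕ) (hk : 1 ≤ k) :
    ∃ x h : ℝ,
      h = ((q:ℝ) - 1) * (∑ i ∈ Finset.range k, (p:ℝ) ^ i) / 2 + 1 ∧
      ((q : ℝ≥0∞)) ^ k ≤
        ((((fun z : ℤ => (z:ℝ)) '' Lam p q w) ∩ Set.Ioo (x - h) (x + h)).encard : ℝ≥0∞) := by
  classical
  have hppos : (0:ℤ) < p := by exact_mod_cast (by omega : 0 < p)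
  set Mk : ℤ := ∑ i ∈ Finset.range k, (if w i = 1 then ((q:ℤ)-1) * (p:ℤ)^i else 0) with hMk
  set mk : ℤ := ∑ i ∈ Finset.range k, (if w i = 1 then 0 else -(((q:ℤ)-1) * (p:ℤ)^i)) with hmk
  have hMm : Mk - mk = ((q:ℤ)-1) * ∑ i ∈ Finset.range k, (p:ℤ)^i := by
    rw [hMk, hmk, ← Finset.sum_sub_distrib, Finset.mul_sum]
    apply Finset.sum_congr rfl
    intro i _
    split_ifs <;> ring
  have hub : ∀ a : ℕ → ℕ, (∀ i, a i < q) →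
      (∑ i ∈ Finset.range k, (a i : ℤ) * w i * (p:ℤ)^i) ≤ Mk := by
    intro a ha
    apply Finset.sum_le_sum
    intro i _
    have hai : (a i : ℤ) ≤ (q:ℤ) - 1 := by
      have := ha i; omega
    have hp0 : (0:ℤ) ≤ (p:ℤ)^i := by positivity
    have ha0 : (0:ℤ) ≤ (a i : ℤ) := by positivity
    rcases hw i with h | h <;> rw [h] <;> norm_num <;> nlinarith
  have hlb : ∀ a : ℕ → ℕ, (∀ i, a i < q) →
      mk ≤ (∑ i ∈ Finset.range k, (a i : ℤ) * w i * (p:ℤ)^i) := by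
    intro a ha
    apply Finset.sum_le_sum
    intro i _
    have hai : (a i : ℤ) ≤ (q:ℤ) - 1 := by
      have := ha i; omega
    have hp0 : (0:ℤ) ≤ (p:ℤ)^i := by positivity
    have ha0 : (0:ℤ) ≤ (a i : ℤ) := by positivity
    rcases hw i with h | h <;> rw [h] <;> norm_num <;> nlinarith
  refine ⟨((mk:ℝ) + (Mk:ℝ))/2, ((Mk:ℝ) - (mk:ℝ))/2 + 1, ?_, ?_⟩
  · have : (Mk:ℝ) - (mk:ℝ) = ((q:ℝ) - 1) * ∑ i ∈ Finset.range k, (p:ℝ)^i := by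
      have := congrArg (fun z : ℤ => (z:ℝ)) hMm
      push_cast at this
      push_cast
      linarith
    rw [this]
  · set x : ℝ := ((mk:ℝ) + (Mk:ℝ))/2 with hx
    set h : ℝ := ((Mk:ℝ) - (mk:ℝ))/2 + 1 with hh
    have hxmh : x - h = (mk:ℝ) - 1 := by rw [hx, hh]; ring
    have hxph : x + h = (Mk:ℝ) + 1 := by rw [hx, hh]; ring
    set dig : (Fin k → Fin q) → ℕ → ℕ :=
      fun A i => if hi : i < k then (A ⟨i, hi⟩ : ℕ) else 0 with hdig
    set emb : (Fin k → Fin q) → ℤ :=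
      fun A => ∑ i ∈ Finset.range k, (dig A i : ℤ) * w i * (p:ℤ)^i with hemb
    have hdiglt : ∀ A i, dig A i < q := by
      intro A i
      simp only [hdig]
      split_ifs with hi
      · exact (A ⟨i, hi⟩).isLt
      · omega
    have hinj : Function.Injective emb := by
      intro A B hAB
      have := digits_inj hq hqp k w hw (dig A) (dig B) (hdiglt A) (hdiglt B) hAB
      funext i
      have h2 := this i.1 i.2
      rw [hdig] at h2
      simp only [dif_pos i.2] at h2
      ext
      simpa using h2
    have hmem : ∀ A : Fin k → Fin q,
        ((emb A : ℤ) : ℝ) ∈ ((fun z : ℤ => (z:ℝ)) '' Lam p q w) ∩ Set.Ioo (x - h) (x + h) := by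
      intro A
      constructor
      · exact ⟨emb A, ⟨k, hk, dig A, hdiglt A, rfl⟩, rfl⟩
      · have h1 : mk ≤ emb A := hlb (dig A) (hdiglt A)
        have h2 : emb A ≤ Mk := hub (dig A) (hdiglt A)
        have h1' : (mk:ℝ) ≤ ((emb A : ℤ):ℝ) := by exact_mod_cast h1
        have h2' : ((emb A : ℤ):ℝ) ≤ (Mk:ℝ) := by exact_mod_cast h2
        rw [Set.mem_Ioo, hxmh, hxph]
        constructor <;> linarith
    have hTsub : (fun z : ℤ => (z:ℝ)) '' (emb '' Set.univ)
        ⊆ ((fun z : ℤ => (z:ℝ)) '' Lam p q w) ∩ Set.Ioo (x - h) (x + h) := by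
      rintro y ⟨z, ⟨A, -, rfl⟩, rfl⟩
      exact hmem A
    have hcardT : ((fun z : ℤ => (z:ℝ)) '' (emb '' Set.univ)).encard = ((q:ℕ∞))^k := by
      rw [Set.InjOn.encard_image (fun z1 _ z2 _ hz => by exact_mod_cast hz)]
      rw [Set.InjOn.encard_image (hinj.injOn)]
      rw [Set.encard_univ]
      rw [ENat.card_eq_coe_fintype_card]
      norm_cast
      rw [Fintype.card_fun]
      simp
    calc ((q : ℝ≥0∞)) ^ k = (((q:ℕ∞))^k : ℕ∞) := by
          push_cast
          rfl
      _ = (((fun z : ℤ => (z:ℝ)) '' (emb '' Set.univ)).encard : ℝ≥0∞) := by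
          rw [hcardT]
      _ ≤ _ := ENat.toENNReal_le.2 (Set.encard_mono hTsub)

set_option maxHeartbeats 1000000 in
lemma final {p q : ℕ} (hq : 2 ≤ q) (hqp : q ≤ p) {w : ℕ → ℤ}
    (hw : ∀ i, w i = 1 ∨ w i = -1) :
    Filter.limsup
      (fun h : ℝ => ⨆ x : ℝ,
        (((((fun z : ℤ => (z:ℝ)) '' Lam p q w) ∩ Set.Ioo (x - h) (x + h)).encard : ℝ≥0∞)
          / ENNReal.ofReal (h ^ sval p q)))
      Filter.atTop
    = ENNReal.ofReal ((2 * gam p q) ^ sval p q) := by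
  have hγ := gam_pos hq hqp
  have hγ1 := gam_ge_one hq hqp
  have hs0 := (sval_pos hq hqp).le
  have hq1 := q1 hq hqp
  have hp1 := p1 hq hqp
  set s := sval p q with hsdef
  set γ := gam p q with hγdef
  set F : ℝ → ℝ≥0∞ := fun h : ℝ => ⨆ x : ℝ,
      (((((fun z : ℤ => (z:ℝ)) '' Lam p q w) ∩ Set.Ioo (x - h) (x + h)).encard : ℝ≥0∞)
        / ENNReal.ofReal (h ^ s)) with hFdef
  set C : ℝ≥0∞ := ENNReal.ofReal ((2 * γ) ^ s) with hCdef
  have h2γ : (0:ℝ) < 2 * γ := by linarith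
  -- continuity helper
  have hcont : Tendsto (fun y : ℝ => ENNReal.ofReal (y ^ s)) (nhds (2*γ)) (nhds C) := by
    rw [hCdef]
    exact (ENNReal.continuous_ofReal.continuousAt.tendsto).comp
      ((Real.continuousAt_rpow_const _ _ (Or.inr hs0)))
  -- UPPER BOUND
  have hupper : Filter.limsup F Filter.atTop ≤ C := by
    set U : ℝ → ℝ≥0∞ := fun h => ENNReal.ofReal ((2*γ + 1/h) ^ s) with hUdef
    have hFU : ∀ᶠ h in Filter.atTop, F h ≤ U h := by
      filter_upwards [Filter.eventually_ge_atTop (1:ℝ)] with h hh1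
      have hh0 : (0:ℝ) < h := by linarith
      rw [hFdef]
      apply iSup_le
      intro x
      have hwin := window_upper hq hqp hw x h hh0
      have heq : ENNReal.ofReal ((γ * (2*h) + 1) ^ s) / ENNReal.ofReal (h ^ s) = U h := by
        rw [hUdef]
        rw [← ENNReal.ofReal_div_of_pos (Real.rpow_pos_of_pos hh0 s)]
        congr 1
        rw [← Real.div_rpow (by nlinarith) hh0.le]
        congr 1
        field_simp
      calc (((((fun z : ℤ => (z:ℝ)) '' Lam p q w) ∩ Set.Ioo (x - h) (x + h)).encard : ℝ≥0∞)
            / ENNReal.ofReal (h ^ s))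
          ≤ ENNReal.ofReal ((γ * (2*h) + 1) ^ s) / ENNReal.ofReal (h ^ s) :=
            ENNReal.div_le_div_right hwin _
        _ = U h := heq
    have hUtend : Tendsto U Filter.atTop (nhds C) := by
      rw [hUdef]
      apply hcont.comp
      have h1 : Tendsto (fun h : ℝ => 1/h) Filter.atTop (nhds 0) := by
        simpa using tendsto_inv_atTop_zero
      have := h1.const_add (2*γ)
      simpa using this
    calc Filter.limsup F Filter.atTop ≤ Filter.limsup U Filter.atTop :=
          Filter.limsup_le_limsup hFU
      _ = C := hUtend.limsup_eq
  -- LOWER BOUND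
  have hlower : C ≤ Filter.limsup F Filter.atTop := by
    set u : ℕ → ℝ := fun k => ((q:ℝ) - 1) * (∑ i ∈ Finset.range (k+1), (p:ℝ) ^ i) / 2 + 1
      with hudef
    have hsum_ge : ∀ k : ℕ, ((k:ℝ) + 1) ≤ ∑ i ∈ Finset.range (k+1), (p:ℝ) ^ i := by
      intro k
      calc ((k:ℝ) + 1) = ∑ i ∈ Finset.range (k+1), (1:ℝ) := by simp
        _ ≤ ∑ i ∈ Finset.range (k+1), (p:ℝ) ^ i := by
            apply Finset.sum_le_sum
            intro i _
            exact one_le_pow₀ hp1.le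
    have huk_ge : ∀ k : ℕ, ((k:ℝ) + 1) / 2 + 1 ≤ u k := by
      intro k
      have h1 := hsum_ge k
      have hk0 : (0:ℝ) ≤ (k:ℝ) := by positivity
      have hS0 : (0:ℝ) ≤ ∑ i ∈ Finset.range (k+1), (p:ℝ) ^ i := by linarith
      have h2 : ((k:ℝ) + 1) ≤ ((q:ℝ) - 1) * (∑ i ∈ Finset.range (k+1), (p:ℝ) ^ i) := by
        have hq2 : (2:ℝ) ≤ (q:ℝ) := by exact_mod_cast hq
        have h3 := mul_le_mul_of_nonneg_right (by linarith : (1:ℝ) ≤ (q:ℝ)-1) hS0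
        rw [one_mul] at h3
        linarith
      simp only [hudef]
      linarith
    have hu_tend : Tendsto u Filter.atTop Filter.atTop := by
      apply tendsto_atTop_mono huk_ge
      apply Filter.tendsto_atTop_add_const_right
      apply Filter.Tendsto.atTop_div_const (by norm_num : (0:ℝ) < 2)
      apply Filter.tendsto_atTop_add_const_right
      exact tendsto_natCast_atTop_atTop
    have huk_pos : ∀ k : ℕ, (0:ℝ) < u k := by
      intro k
      have h1 := hsum_ge k
      have hk0 : (0:ℝ) ≤ (k:ℝ) := by positivity
      have hS0 : (0:ℝ) ≤ ∑ i ∈ Finset.range (k+1), (p:ℝ) ^ i := by linarith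
      simp only [hudef]
      nlinarith
    -- pointwise lower bound for F ∘ u
    set V : ℕ → ℝ≥0∞ := fun k => ((q : ℝ≥0∞))^(k+1) / ENNReal.ofReal ((u k) ^ s) with hVdef
    have hFV : ∀ k : ℕ, V k ≤ (F ∘ u) k := by
      intro k
      obtain ⟨x, h, hh, hcard⟩ := window_lower hq hqp hw (k+1) (by omega)
      have hhu : h = u k := by rw [hh]
      rw [hhu] at hcard
      calc V k = ((q : ℝ≥0∞))^(k+1) / ENNReal.ofReal ((u k) ^ s) := by simp only [hVdef]
        _ ≤ (((((fun z : ℤ => (z:ℝ)) '' Lam p q w) ∩ Set.Ioo (x - u k) (x + u k)).encard : ℝ≥0∞))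
              / ENNReal.ofReal ((u k) ^ s) := ENNReal.div_le_div_right hcard _
        _ ≤ (F ∘ u) k := by
              simp only [hFdef, Function.comp_apply]
              exact le_iSup (fun x : ℝ =>
                (((((fun z : ℤ => (z:ℝ)) '' Lam p q w) ∩ Set.Ioo (x - u k) (x + u k)).encard : ℝ≥0∞))
                  / ENNReal.ofReal ((u k) ^ s)) x
    -- V tends to C
    have hVtend : Tendsto V Filter.atTop (nhds C) := by
      have hppos : (0:ℝ) < p := by linarith
      set r : ℕ → ℝ := fun k => (p:ℝ)^(k+1) / u k with hrdef
      have hVr : ∀ k, V k = ENNReal.ofReal ((r k) ^ s) := by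
        intro k
        simp only [hVdef, hrdef]
        have e1 : ((q : ℝ≥0∞))^(k+1) = ENNReal.ofReal ((q:ℝ)^(k+1)) := by
          rw [ENNReal.ofReal_pow (by positivity : (0:ℝ) ≤ (q:ℝ)), ENNReal.ofReal_natCast]
        rw [e1, ← ENNReal.ofReal_div_of_pos (Real.rpow_pos_of_pos (huk_pos k) s)]
        congr 1
        have e2 : ((q:ℝ))^(k+1) = ((p:ℝ)^(k+1)) ^ s := by
          rw [← Real.rpow_natCast ((p:ℝ)) (k+1), ← Real.rpow_mul hppos.le, mul_comm,
            Real.rpow_mul hppos.le, rpow_sval hq hqp, Real.rpow_natCast]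
        rw [e2, ← Real.div_rpow (by positivity) (huk_pos k).le]
      have hrtend : Tendsto r Filter.atTop (nhds (2*γ)) := by
        set y : ℕ → ℝ := fun k => ((p:ℝ)^(k+1))⁻¹ with hydef
        have hy0 : Tendsto y Filter.atTop (nhds 0) := by
          rw [hydef]
          apply Filter.Tendsto.inv_tendsto_atTop
          have := tendsto_pow_atTop_atTop_of_one_lt hp1
          exact this.comp (tendsto_add_atTop_nat 1)
        have hrid : ∀ k, r k = 2*((p:ℝ)-1) /
            (((q:ℝ)-1) * (1 - y k) + 2*((p:ℝ)-1) * y k) := by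
          intro k
          simp only [hrdef, hydef, hudef]
          have hP : (0:ℝ) < (p:ℝ)^(k+1) := by positivity
          have hP1 : (1:ℝ) ≤ (p:ℝ)^(k+1) := one_le_pow₀ hp1.le
          have hpm1 : (p:ℝ) - 1 ≠ 0 := by linarith
          have hgeom : ∑ i ∈ Finset.range (k+1), (p:ℝ) ^ i
              = ((p:ℝ)^(k+1) - 1)/((p:ℝ) - 1) := by
            rw [geom_sum_eq (by linarith : (p:ℝ) ≠ 1)]
          have hinv1 : ((p:ℝ)^(k+1))⁻¹ ≤ 1 := by
            rw [inv_le_one_iff₀]; right; exact hP1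
          have hinv0 : (0:ℝ) < ((p:ℝ)^(k+1))⁻¹ := by positivity
          have hden2 : (0:ℝ) < ((q:ℝ)-1) * (1 - ((p:ℝ)^(k+1))⁻¹)
              + 2*((p:ℝ)-1) * ((p:ℝ)^(k+1))⁻¹ := by
            have t1 : (0:ℝ) ≤ ((q:ℝ)-1) * (1 - ((p:ℝ)^(k+1))⁻¹) := by nlinarith
            nlinarith
          have hfrac0 : (0:ℝ) ≤ ((p:ℝ)^(k+1) - 1)/((p:ℝ) - 1) := by
            apply div_nonneg <;> linarith
          have hden1 : (0:ℝ) < ((q:ℝ)-1) * (((p:ℝ)^(k+1) - 1)/((p:ℝ) - 1)) / 2 + 1 := by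
            nlinarith
          rw [hgeom, div_eq_div_iff hden1.ne' hden2.ne']
          field_simp
        have hcont2 : Tendsto (fun t : ℝ => 2*((p:ℝ)-1) /
            (((q:ℝ)-1) * (1 - t) + 2*((p:ℝ)-1) * t)) (nhds 0) (nhds (2*γ)) := by
          have hden : Tendsto (fun t : ℝ => ((q:ℝ)-1) * (1 - t) + 2*((p:ℝ)-1) * t)
              (nhds 0) (nhds ((q:ℝ)-1)) := by
            have : Continuous (fun t : ℝ => ((q:ℝ)-1) * (1 - t) + 2*((p:ℝ)-1) * t) :=
              ((continuous_const.mul (continuous_const.sub continuous_id)).add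
                (continuous_const.mul continuous_id))
            have h2 := this.tendsto 0
            simpa using h2
          have h3 := (tendsto_const_nhds (x := 2*((p:ℝ)-1))).div hden (by linarith)
          have e : 2*((p:ℝ)-1)/((q:ℝ)-1) = 2*γ := by
            rw [hγdef, gam]; ring
          rwa [e] at h3
        have := hcont2.comp hy0
        have e3 : (fun t : ℝ => 2*((p:ℝ)-1) /
            (((q:ℝ)-1) * (1 - t) + 2*((p:ℝ)-1) * t)) ∘ y = r := by
          funext k
          rw [Function.comp_apply, hrid k]
        rwa [e3] at this
      have : Tendsto (fun k => ENNReal.ofReal ((r k) ^ s)) Filter.atTop (nhds C) :=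
        hcont.comp hrtend
      have e4 : (fun k => ENNReal.ofReal ((r k) ^ s)) = V := by
        funext k; rw [hVr k]
      rwa [e4] at this
    -- chain
    have hmap : Filter.limsup F (Filter.map u Filter.atTop) = Filter.limsup (F ∘ u) Filter.atTop := by
      show Filter.limsSup (Filter.map F (Filter.map u Filter.atTop)) = _
      rw [Filter.map_map]
      rfl
    calc C = Filter.liminf V Filter.atTop := hVtend.liminf_eq.symm
      _ ≤ Filter.liminf (F ∘ u) Filter.atTop :=
          Filter.liminf_le_liminf (Filter.Eventually.of_forall hFV)
      _ ≤ Filter.limsup (F ∘ u) Filter.atTop := Filter.liminf_le_limsup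
      _ = Filter.limsup F (Filter.map u Filter.atTop) := hmap.symm
      _ ≤ Filter.limsup F Filter.atTop := Filter.limsup_le_limsup_of_le hu_tend
  exact le_antisymm hupper hlower

end BDS

/-- For every sequence `w = (w_1, w_2, …)` with `w_i ∈ {−1, 1}`, the set
`Λ_w = {Σ_{i=1}^k a_i w_i p^{i−1} : k ≥ 1, a_i ∈ {0,…,q−1}}` satisfies
`D_s^+(Λ_w) = (2(p−1)/(q−1))^s`, where `s = log q / log p`. -/
theorem beurling_density_signed_spectrum
    (p q : ℕ) (hq : 2 ≤ q) (hqp : q ≤ p) (hdvd : q ∣ p)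
    (w : ℕ → ℤ) (hw : ∀ i, w i = 1 ∨ w i = -1) :
    beurlingDensityPlus (Real.log q / Real.log p)
        {x : ℝ | ∃ k : ℕ, 1 ≤ k ∧ ∃ a : ℕ → ℕ, (∀ i, a i < q) ∧
          x = ∑ i ∈ Finset.range k, (a i : ℝ) * (w i : ℝ) * (p : ℝ) ^ i}
      = ENNReal.ofReal ((2 * ((p : ℝ) - 1) / ((q : ℝ) - 1)) ^ (Real.log q / Real.log p)) := by
  rw [BDS.Lam_real p q w]
  unfold beurlingDensityPlus
  have h2 : (2 * ((p:ℝ) - 1) / ((q:ℝ) - 1)) = 2 * BDS.gam p q := by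
    rw [BDS.gam, mul_div_assoc]
  rw [h2]
  have h3 : Real.log q / Real.log p = BDS.sval p q := rfl
  rw [h3]
  exact BDS.final hq hqp hw
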